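/- arXiv:math/0207155 — 5 statements merged into one kernel-verified Lean document; each statement's English description precedes it below -/
import Mathlib

section
/- For every complex number t, P(u(t), v(t)) = 0, where P(x,y) = y² - C_p · (x + (p-1)²/(4p)) · ∏_{i=0}^{p-2} (x + i(2p-2-i)/(4p))², with C_p = (4p)^{2p-1}/((2p-1)!)², u(t) = t(t-2(p-1))/(4p) and v(t) = (∏_{k=0}^{2p-2}(t-k))/(2p-1)!. -/
theorem stmt_3 (p : ℕ) (hp : 2 ≤ p) (u v : ℂ → ℂ) (P : ℂ → ℂ → ℂ) (Cp : ℂ)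
    (hC : Cp = (4 * (p : ℂ)) ^ (2 * p - 1) / ((2 * p - 1).factorial : ℂ) ^ 2)
    (hu : ∀ t : ℂ, u t = (1 / (4 * (p : ℂ))) * t * (t - 2 * ((p : ℂ) - 1)))
    (hv : ∀ t : ℂ, v t =
      (∏ k ∈ Finset.range (2 * p - 1), (t - (k : ℂ))) / ((2 * p - 1).factorial : ℂ))
    (hP : ∀ x y : ℂ, P x y = y ^ 2 - Cp * (x + ((p : ℂ) - 1) ^ 2 / (4 * (p : ℂ))) *
      ∏ i ∈ Finset.range (p - 1),
        (x + ((i : ℂ) / (4 * (p : ℂ))) * (2 * (p : ℂ) - 2 - (i : ℂ))) ^ 2) :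
    ∀ t : ℂ, P (u t) (v t) = 0 := by
  intro t
  obtain ⟨q, rfl⟩ : ∃ q, p = q + 1 := ⟨p - 1, by omega⟩
  have h1 : 2 * (q + 1) - 1 = 2 * q + 1 := by omega
  have h2 : q + 1 - 1 = q := by omega
  rw [hP, hv, hu, hC, h1, h2]
  have hD : (4 * (((q:ℕ) + 1 : ℕ) : ℂ)) ≠ 0 := by
    have : (((q:ℕ) + 1 : ℕ) : ℂ) ≠ 0 := Nat.cast_ne_zero.mpr (by omega)
    exact mul_ne_zero (by norm_num) this
  have hF : (((2 * q + 1).factorial : ℕ) : ℂ) ≠ 0 :=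
    Nat.cast_ne_zero.mpr (Nat.factorial_ne_zero _)
  push_cast at hD ⊢
  have key : ∏ k ∈ Finset.range (2 * q + 1), (t - (k : ℂ)) =
      (t - (q : ℂ)) * ∏ i ∈ Finset.range q, ((t - (i:ℂ)) * (t - (2 * (q:ℂ) - (i:ℂ)))) := by
    have e1 : 2 * q + 1 = (q + 1) + q := by omega
    rw [e1, Finset.prod_range_add, Finset.prod_range_succ]
    have e2 : ∏ k ∈ Finset.range q, (t - ((q + 1 + k : ℕ) : ℂ)) =
        ∏ i ∈ Finset.range q, (t - (2 * (q:ℂ) - (i:ℂ))) := by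
      rw [← Finset.prod_range_reflect (fun k => t - ((q + 1 + k : ℕ) : ℂ)) q]
      apply Finset.prod_congr rfl
      intro i hi
      simp only [Finset.mem_range] at hi
      have h3 : q + 1 + (q - 1 - i) = 2 * q - i := by omega
      simp only [h3]
      congr 1
      have h4 : i ≤ 2 * q := by omega
      push_cast [Nat.cast_sub h4]
      ring
    rw [e2, Finset.prod_mul_distrib]; ring
  rw [key]
  have hfac : ∀ i ∈ Finset.range q,
      ((1 / (4 * ((q:ℂ) + 1))) * t * (t - 2 * (((q:ℂ) + 1) - 1)) +
        ((i:ℂ) / (4 * ((q:ℂ) + 1))) * (2 * ((q:ℂ) + 1) - 2 - (i:ℂ))) ^ 2 =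
      (((t - (i:ℂ)) * (t - (2 * (q:ℂ) - (i:ℂ)))) / (4 * ((q:ℂ) + 1))) ^ 2 := by
    intro i hi
    congr 1
    field_simp
    ring
  rw [Finset.prod_congr rfl hfac]
  simp only [div_pow, Finset.prod_div_distrib, Finset.prod_pow, Finset.prod_const,
    Finset.card_range]
  field_simp
  ring
end

section
/- The polynomial g(x) = C_p (x + (p-1)²/(4p)) ∏_{i=0}^{p-2} (x + (i/(4p))(2p-2-i))², where C_p = (4p)^{2p-1}/((2p-1)!)², satisfies g(u(t)) = v(t)² for all t ∈ ℂ, where u(t) = t(t-2(p-1))/(4p) and v(t) = binom(t, 2p-1); i.e., the composition g ∘ u equals the square of the polynomial v. -/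
open Finset

lemma prodA (q : ℕ) (t : ℂ) :
    ∏ k ∈ range (2*q+1), (t - (k : ℂ)) =
      (t - q) * ∏ i ∈ range q, ((t - i) * (t - (2*(q:ℂ) - i))) := by
  have h1 : 2*q+1 = (q+1) + q := by ring
  rw [h1, Finset.prod_range_add, Finset.prod_range_succ, Finset.prod_mul_distrib]
  have h2 : ∏ i ∈ range q, (t - (2*(q:ℂ) - i)) =
      ∏ j ∈ range q, (t - (((q+1+j : ℕ) : ℂ))) := by
    rw [← Finset.prod_range_reflect (fun j => (t - (((q+1+j : ℕ)) : ℂ))) q]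
    apply Finset.prod_congr rfl
    intro i hi
    simp only [Finset.mem_range] at hi
    congr 1
    have h3 : q + 1 + (q - 1 - i) = 2*q - i := by omega
    rw [h3, Nat.cast_sub (by omega : i ≤ 2*q)]
    push_cast
    ring
  rw [h2]
  ring

theorem stmt_6 (p : ℕ) (hp : 2 ≤ p) (u v g : ℂ → ℂ) (Cp : ℂ)
    (hC : Cp = (4 * (p : ℂ)) ^ (2 * p - 1) / ((2 * p - 1).factorial : ℂ) ^ 2)
    (hu : ∀ t : ℂ, u t = (1 / (4 * (p : ℂ))) * t * (t - 2 * ((p : ℂ) - 1)))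
    (hv : ∀ t : ℂ, v t =
      (∏ k ∈ Finset.range (2 * p - 1), (t - (k : ℂ))) / ((2 * p - 1).factorial : ℂ))
    (hg : ∀ x : ℂ, g x = Cp * (x + ((p : ℂ) - 1) ^ 2 / (4 * (p : ℂ))) *
      ∏ i ∈ Finset.range (p - 1),
        (x + ((i : ℂ) / (4 * (p : ℂ))) * (2 * (p : ℂ) - 2 - (i : ℂ))) ^ 2) :
    ∀ t : ℂ, g (u t) = (v t) ^ 2 := by
  obtain ⟨q, rfl⟩ : ∃ q, p = q + 1 := ⟨p - 1, by omega⟩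
  intro t
  have hqc : ((q + 1 : ℕ) : ℂ) = (q : ℂ) + 1 := by push_cast; ring
  have hc : (4 : ℂ) * ((q : ℂ) + 1) ≠ 0 := by
    have h4 : ((q : ℂ) + 1) ≠ 0 := Nat.cast_add_one_ne_zero q
    exact mul_ne_zero (by norm_num) h4
  have hF : ((2*q+1).factorial : ℂ) ≠ 0 := by
    exact_mod_cast Nat.factorial_ne_zero (2*q+1)
  have hidx1 : 2 * (q + 1) - 1 = 2*q+1 := by omega
  have hidx2 : (q + 1) - 1 = q := by omega
  rw [hg, hv, hC, hqc, hidx1, hidx2]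
  have hA : u t + ((q : ℂ) + 1 - 1)^2 / (4 * ((q:ℂ)+1)) =
      (t - q)^2 / (4 * ((q:ℂ)+1)) := by
    rw [hu, hqc]
    field_simp
    ring
  have hB : ∀ i ∈ range q, (u t + ((i:ℂ) / (4 * ((q:ℂ)+1))) * (2 * ((q:ℂ)+1) - 2 - i)) ^ 2
      = (((t - i) * (t - (2*(q:ℂ) - i))) / (4 * ((q:ℂ)+1))) ^ 2 := by
    intro i _
    rw [hu, hqc]
    congr 1
    field_simp
    ring
  rw [Finset.prod_congr rfl hB, hA]
  simp only [div_pow]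
  rw [Finset.prod_div_distrib, Finset.prod_const, Finset.prod_pow, prodA, Finset.card_range]
  have hpow : (4*((q:ℂ)+1)) ^ (2*q+1) = (4*((q:ℂ)+1)) * ((4*((q:ℂ)+1))^2)^q := by
    rw [pow_succ, pow_mul]; ring
  rw [hpow]
  have hD : ((4*((q:ℂ)+1))^2)^q ≠ 0 := pow_ne_zero _ (pow_ne_zero _ hc)
  set D := ((4*((q:ℂ)+1))^2)^q with hDdef
  field_simp
end

section
/- If B(x), C(x) ∈ ℂ[x] satisfy B(u(t)) v(t) + C(u(t)) = 0 for all t ∈ ℂ, where u(t) = t(t-2(p-1))/(4p) and v(t) = binom(t, 2p-1), then B = 0 and C = 0. -/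
open Polynomial

theorem stmt_7 (p : ℕ) (hp : 2 ≤ p) (u v : ℂ → ℂ)
    (hu : ∀ t : ℂ, u t = (1 / (4 * (p : ℂ))) * t * (t - 2 * ((p : ℂ) - 1)))
    (hv : ∀ t : ℂ, v t =
      (∏ k ∈ Finset.range (2 * p - 1), (t - (k : ℂ))) / ((2 * p - 1).factorial : ℂ))
    (B C : Polynomial ℂ)
    (h : ∀ t : ℂ, B.eval (u t) * v t + C.eval (u t) = 0) :
    B = 0 ∧ C = 0 := by
  have hpc : (p : ℂ) ≠ 0 := Nat.cast_ne_zero.mpr (by omega)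
  have ha : (1 / (4 * (p : ℂ))) ≠ 0 := by
    simp [hpc]
  have hfact : ((2 * p - 1).factorial : ℂ) ≠ 0 :=
    Nat.cast_ne_zero.mpr (Nat.factorial_ne_zero _)
  set U : Polynomial ℂ :=
    Polynomial.C (1 / (4 * (p : ℂ))) * (Polynomial.X * (Polynomial.X - Polynomial.C (2 * ((p : ℂ) - 1)))) with hUdef
  set V : Polynomial ℂ := ∏ k ∈ Finset.range (2 * p - 1), (Polynomial.X - Polynomial.C (k : ℂ)) with hVdef
  have hUeval : ∀ t : ℂ, U.eval t = u t := by
    intro t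
    simp [hUdef, hu t]
    ring
  have hVeval : ∀ t : ℂ, V.eval t = ∏ k ∈ Finset.range (2 * p - 1), (t - (k : ℂ)) := by
    intro t
    simp only [hVdef, Polynomial.eval_prod, Polynomial.eval_sub, Polynomial.eval_X,
      Polynomial.eval_C]
  have hUdeg : U.natDegree = 2 := by
    rw [hUdef]
    compute_degree!
    omega
  have hVdeg : V.natDegree = 2 * p - 1 := by
    rw [hVdef, Polynomial.natDegree_prod]
    · simp only [Polynomial.natDegree_X_sub_C, Finset.sum_const, smul_eq_mul,
        Finset.card_range, mul_one]
    · intro i _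
      exact Polynomial.X_sub_C_ne_zero _
  have hVne : V ≠ 0 := by
    have : V.Monic := monic_prod_of_monic _ _ (fun i _ => monic_X_sub_C _)
    exact this.ne_zero
  have hUnotC : ∀ c : ℂ, U ≠ Polynomial.C c := by
    intro c hc
    have := congrArg Polynomial.natDegree hc
    rw [hUdeg, Polynomial.natDegree_C] at this
    exact two_ne_zero this
  -- The key polynomial identity
  have hQ : B.comp U * V + Polynomial.C (((2 * p - 1).factorial : ℂ)) * C.comp U = 0 := by
    apply Polynomial.funext
    intro t
    have ht := h t
    rw [hv t] at ht
    simp only [Polynomial.eval_add, Polynomial.eval_mul, Polynomial.eval_comp,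
      Polynomial.eval_C, Polynomial.eval_zero, hUeval, hVeval]
    field_simp at ht
    linear_combination ht
  have hB : B = 0 := by
    by_contra hBne
    have hBc : B.comp U ≠ 0 := by
      intro hc
      rcases Polynomial.comp_eq_zero_iff.mp hc with h1 | ⟨_, h2⟩
      · exact hBne h1
      · exact hUnotC _ h2
    have heq : B.comp U * V = -(Polynomial.C (((2 * p - 1).factorial : ℂ)) * C.comp U) := by
      linear_combination hQ
    have hL : B.comp U * V ≠ 0 := mul_ne_zero hBc hVne
    have hCc : C.comp U ≠ 0 := by
      intro hc
      rw [hc, mul_zero, neg_zero] at heq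
      exact hL heq
    have hdeg := congrArg Polynomial.natDegree heq
    rw [Polynomial.natDegree_neg, Polynomial.natDegree_mul hBc hVne,
      Polynomial.natDegree_mul (Polynomial.C_ne_zero.mpr hfact) hCc,
      Polynomial.natDegree_comp, Polynomial.natDegree_comp, Polynomial.natDegree_C,
      hUdeg, hVdeg] at hdeg
    omega
  refine ⟨hB, ?_⟩
  rw [hB] at hQ
  simp only [Polynomial.zero_comp, zero_mul, zero_add] at hQ
  have hCc : C.comp U = 0 := by
    rcases mul_eq_zero.mp hQ with hc | hc
    · exact absurd hc (Polynomial.C_ne_zero.mpr hfact)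
    · exact hc
  rw [Polynomial.comp_eq_zero_iff] at hCc
  rcases hCc with hc | ⟨_, hc⟩
  · exact hc
  · exact absurd hc (hUnotC _)
end

section
/- If K(x,y) ∈ ℂ[x,y] satisfies K(u(t), v(t)) = 0 for all t ∈ ℂ, then K lies in the ideal of ℂ[x,y] generated by P(x,y), where P(x,y) = y² - C_p (x + (p-1)²/(4p)) ∏_{i=0}^{p-2} (x + (i/(4p))(2p-2-i))², C_p = (4p)^{2p-1}/((2p-1)!)², u(t) = t(t-2(p-1))/(4p), v(t) = binom(t,2p-1). -/
open MvPolynomial Finset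

noncomputable def sig2 : Polynomial ℂ →ₐ[ℂ] MvPolynomial (Fin 2) ℂ := Polynomial.aeval (X 0)

lemma eval_sig2 (m : Fin 2 → ℂ) (A : Polynomial ℂ) :
    MvPolynomial.eval m (sig2 A) = A.eval (m 0) := by
  have h := Polynomial.aeval_algHom_apply (MvPolynomial.aeval m) (X 0 : MvPolynomial (Fin 2) ℂ) A
  simp [sig2] at h ⊢
  rw [h]

lemma div_lemma (W : Polynomial ℂ) (K : MvPolynomial (Fin 2) ℂ) :
    ∃ Q A B, K = Q * ((X 1)^2 - sig2 W) + sig2 A * X 1 + sig2 B := by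
  induction K using MvPolynomial.induction_on with
  | C a => exact ⟨0, 0, Polynomial.C a, by simp [sig2]⟩
  | add f g hf hg =>
    obtain ⟨Q1,A1,B1,h1⟩ := hf; obtain ⟨Q2,A2,B2,h2⟩ := hg
    exact ⟨Q1+Q2, A1+A2, B1+B2, by rw [h1, h2]; simp [map_add]; ring⟩
  | mul_X f i hf =>
    obtain ⟨Q,A,B,h⟩ := hf
    fin_cases i
    · exact ⟨Q * X 0, A * Polynomial.X, B * Polynomial.X, by
        rw [h]; simp [map_mul, sig2]; ring⟩
    · exact ⟨Q * X 1 + sig2 A, B, A * W, by rw [h]; simp [map_mul]; ring⟩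

lemma key_prod (q : ℕ) (t : ℂ) :
    ∏ k ∈ range (2*q+1), (t - (k:ℂ)) =
      ((∏ i ∈ range q, (t - (i:ℂ))) * (t - (q:ℂ))) * ∏ j ∈ range q, (t - ((q:ℂ)+1+(j:ℂ))) := by
  have h : 2*q+1 = (q+1)+q := by ring
  rw [h, Finset.prod_range_add, Finset.prod_range_succ]
  congr 1
  apply Finset.prod_congr rfl
  intro j _
  push_cast
  ring

lemma reflect_prod (q : ℕ) (t : ℂ) :
    ∏ i ∈ range q, (t - (2*(q:ℂ) - (i:ℂ))) = ∏ j ∈ range q, (t - ((q:ℂ)+1+(j:ℂ))) := by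
  rw [← Finset.prod_range_reflect (fun j => t - ((q:ℂ)+1+(j:ℂ))) q]
  apply Finset.prod_congr rfl
  intro i hi
  have hi' : i < q := Finset.mem_range.mp hi
  have h2 : q - 1 - i + (i + 1) = q := by omega
  have h3 : ((q - 1 - i : ℕ) : ℂ) = (q:ℂ) - (i:ℂ) - 1 := by
    have := congrArg (fun n : ℕ => (n : ℂ)) h2
    push_cast at this
    linear_combination this
  simp only [h3]
  ring

lemma reflect_full (q : ℕ) (t : ℂ) :
    ∏ k ∈ range (2*q+1), ((2*(q:ℂ) - t) - (k:ℂ)) = - ∏ k ∈ range (2*q+1), (t - (k:ℂ)) := by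
  have h1 : ∀ k ∈ range (2*q+1), (2*(q:ℂ) - t) - (k:ℂ) = (-1) * (t - ((2*q - k:ℕ):ℂ)) := by
    intro k hk
    have hk' : k ≤ 2*q := by have := Finset.mem_range.mp hk; omega
    have hc : ((2*q - k:ℕ):ℂ) = 2*(q:ℂ) - (k:ℂ) := by push_cast [hk']; ring
    rw [hc]; ring
  rw [Finset.prod_congr rfl h1, Finset.prod_mul_distrib, Finset.prod_const, Finset.card_range]
  have h2 : ∏ k ∈ range (2*q+1), (t - ((2*q - k:ℕ):ℂ)) = ∏ k ∈ range (2*q+1), (t - (k:ℂ)) := by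
    have := Finset.prod_range_reflect (fun j => t - (j:ℂ)) (2*q+1)
    rw [← this]
    apply Finset.prod_congr rfl
    intro k _
    congr 2
  rw [h2, Odd.neg_one_pow ⟨q, by ring⟩]
  ring

lemma main_identity (p q : ℕ) (hq : p = q + 1) (hp2 : 2 ≤ p) (Cp : ℂ)
    (hC : Cp = (4 * (p : ℂ)) ^ (2 * p - 1) / ((2 * p - 1).factorial : ℂ) ^ 2)
    (t : ℂ) :
    ((∏ k ∈ range (2 * p - 1), (t - (k : ℂ))) / ((2 * p - 1).factorial : ℂ))^2 =
      Cp * ((1 / (4 * (p : ℂ))) * t * (t - 2 * ((p : ℂ) - 1)) + ((p : ℂ) - 1) ^ 2 / (4 * (p : ℂ))) *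
      ∏ i ∈ range (p - 1),
        ((1 / (4 * (p : ℂ))) * t * (t - 2 * ((p : ℂ) - 1)) +
          ((i : ℂ) / (4 * (p : ℂ))) * (2 * (p : ℂ) - 2 - (i : ℂ))) ^ 2 := by
  have e1 : 2*p-1 = 2*q+1 := by omega
  have e2 : p-1 = q := by omega
  have hqc : (p:ℂ) = (q:ℂ)+1 := by rw [hq]; push_cast; ring
  have hp0 : (4*(p:ℂ)) ≠ 0 := by
    have : (p:ℂ) ≠ 0 := Nat.cast_ne_zero.mpr (by omega)
    exact mul_ne_zero (by norm_num) this
  have hF : ((2*q+1).factorial : ℂ) ≠ 0 := Nat.cast_ne_zero.mpr (Nat.factorial_ne_zero _)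
  simp only [e1, e2] at hC ⊢
  have hfac : ∀ i ∈ range q,
      ((1 / (4 * (p : ℂ))) * t * (t - 2 * ((p : ℂ) - 1)) +
        ((i : ℂ) / (4 * (p : ℂ))) * (2 * (p : ℂ) - 2 - (i : ℂ))) ^ 2
      = (1/(4*(p:ℂ)))^2 * ((t - (i:ℂ)) * (t - (2*(q:ℂ) - (i:ℂ))))^2 := by
    intro i _
    rw [hqc]
    field_simp
    ring
  rw [Finset.prod_congr rfl hfac, Finset.prod_mul_distrib, Finset.prod_const, card_range]
  have hcen : (1 / (4 * (p : ℂ))) * t * (t - 2 * ((p : ℂ) - 1)) + ((p : ℂ) - 1) ^ 2 / (4 * (p : ℂ))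
      = (1/(4*(p:ℂ))) * (t - (q:ℂ))^2 := by
    rw [hqc]; field_simp; ring
  rw [hcen, key_prod q t, Finset.prod_pow, Finset.prod_mul_distrib, reflect_prod, hC]
  field_simp
  have hpow : (4*(p:ℂ)) ^ (2*q+1) = ((4*(p:ℂ))^2)^q * (4*(p:ℂ)) := by
    rw [pow_succ, pow_mul]
  rw [hpow]
  have h42 : (4*(p:ℂ))^2 = 4^2*(p:ℂ)^2 := mul_pow _ _ _
  have h1 : ((4*(p:ℂ))^2)^q * (1/(4^2*(p:ℂ)^2))^q = 1 := by
    rw [← mul_pow, ← h42, mul_one_div_cancel (pow_ne_zero 2 hp0), one_pow]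
  have hp' : (p:ℂ) ≠ 0 := Nat.cast_ne_zero.mpr (by omega)
  rw [eq_div_iff hp']
  linear_combination (-((∏ i ∈ range q, (t - (i:ℂ))) ^ 2 * (t - (q:ℂ)) ^ 2 * (∏ x ∈ range q, (t - ((q:ℂ) + 1 + (x:ℂ)))) ^ 2) * 4 * (p:ℂ)) * h1

open MvPolynomial in
theorem stmt_9 (p : ℕ) (hp : 2 ≤ p) (u v : ℂ → ℂ) (Cp : ℂ)
    (hC : Cp = (4 * (p : ℂ)) ^ (2 * p - 1) / ((2 * p - 1).factorial : ℂ) ^ 2)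
    (hu : ∀ t : ℂ, u t = (1 / (4 * (p : ℂ))) * t * (t - 2 * ((p : ℂ) - 1)))
    (hv : ∀ t : ℂ, v t =
      (∏ k ∈ Finset.range (2 * p - 1), (t - (k : ℂ))) / ((2 * p - 1).factorial : ℂ))
    (P : MvPolynomial (Fin 2) ℂ)
    (hP : P = (X 1) ^ 2 - C Cp * ((X 0) + C (((p : ℂ) - 1) ^ 2 / (4 * (p : ℂ)))) *
      ∏ i ∈ Finset.range (p - 1),
        ((X 0) + C (((i : ℂ) / (4 * (p : ℂ))) * (2 * (p : ℂ) - 2 - (i : ℂ)))) ^ 2)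
    (K : MvPolynomial (Fin 2) ℂ)
    (hK : ∀ t : ℂ, MvPolynomial.eval ![u t, v t] K = 0) :
    K ∈ Ideal.span {P} := by
  obtain ⟨q, hq⟩ : ∃ q, p = q + 1 := ⟨p-1, by omega⟩
  have hqc : (p:ℂ) = (q:ℂ)+1 := by rw [hq]; push_cast; ring
  have e1 : 2*p-1 = 2*q+1 := by omega
  have hp0 : (4*(p:ℂ)) ≠ 0 := by
    have : (p:ℂ) ≠ 0 := Nat.cast_ne_zero.mpr (by omega)
    exact mul_ne_zero (by norm_num) this
  set W : Polynomial ℂ := Polynomial.C Cp *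
      (Polynomial.X + Polynomial.C (((p:ℂ)-1)^2/(4*(p:ℂ)))) *
      ∏ i ∈ Finset.range (p-1),
        (Polynomial.X + Polynomial.C (((i:ℂ)/(4*(p:ℂ)))*(2*(p:ℂ)-2-(i:ℂ))))^2 with hW
  have hsW : sig2 W = C Cp * ((X 0) + C (((p : ℂ) - 1) ^ 2 / (4 * (p : ℂ)))) *
      ∏ i ∈ Finset.range (p - 1),
        ((X 0) + C (((i : ℂ) / (4 * (p : ℂ))) * (2 * (p : ℂ) - 2 - (i : ℂ)))) ^ 2 := by
    simp [hW, sig2, map_prod, MvPolynomial.algebraMap_eq]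
  have hPW : P = (X 1)^2 - sig2 W := by rw [hP, hsW]
  obtain ⟨Q, A, B, hdec⟩ := div_lemma W K
  have hWeval : ∀ x : ℂ, W.eval x = Cp * (x + ((p:ℂ)-1)^2/(4*(p:ℂ))) *
      ∏ i ∈ Finset.range (p-1), (x + ((i:ℂ)/(4*(p:ℂ)))*(2*(p:ℂ)-2-(i:ℂ)))^2 := by
    intro x
    simp [hW, Polynomial.eval_prod]
  have hkey : ∀ t : ℂ, (v t)^2 = W.eval (u t) := by
    intro t
    rw [hWeval, hv, hu]
    exact main_identity p q hq hp Cp hC t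
  have heval : ∀ t : ℂ, A.eval (u t) * v t + B.eval (u t) = 0 := by
    intro t
    have h0 := hK t
    rw [hdec] at h0
    simp only [map_add, map_mul, map_sub, map_pow, eval_sig2, MvPolynomial.eval_X] at h0
    rw [show (![u t, v t] : Fin 2 → ℂ) 0 = u t from rfl,
        show (![u t, v t] : Fin 2 → ℂ) 1 = v t from rfl] at h0
    rw [← hkey t] at h0
    simpa using h0
  have hrefl : ∀ t : ℂ, A.eval (u t) * (- v t) + B.eval (u t) = 0 := by
    intro t
    have h1 := heval (2*(q:ℂ) - t)
    have hu2 : u (2*(q:ℂ) - t) = u t := by rw [hu, hu, hqc]; ring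
    have hv2 : v (2*(q:ℂ) - t) = - v t := by
      rw [hv, hv]
      simp only [e1]
      rw [reflect_full q t]
      ring
    rw [hu2, hv2] at h1
    exact h1
  have hBu : ∀ t : ℂ, B.eval (u t) = 0 := by
    intro t
    linear_combination (heval t)/2 + (hrefl t)/2
  have hAu0 : ∀ t : ℂ, A.eval (u t) * v t = 0 := by
    intro t
    linear_combination (heval t)/2 - (hrefl t)/2
  have hsurj : ∀ x : ℂ, ∃ t, u t = x := by
    intro x
    obtain ⟨s, hs⟩ := IsAlgClosed.exists_pow_nat_eq (((p:ℂ)-1)^2 + 4*(p:ℂ)*x) (n := 2) (by norm_num)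
    refine ⟨((p:ℂ)-1) + s, ?_⟩
    rw [hu, div_mul_eq_mul_div, one_mul, div_mul_eq_mul_div, div_eq_iff hp0]
    linear_combination hs
  have hB0 : B = 0 := by
    apply Polynomial.funext
    intro x
    obtain ⟨t, ht⟩ := hsurj x
    simpa [ht] using hBu t
  set Upoly : Polynomial ℂ := Polynomial.C (1/(4*(p:ℂ))) * Polynomial.X *
      (Polynomial.X - Polynomial.C (2*((p:ℂ)-1))) with hUp
  have hUeval : ∀ t : ℂ, Upoly.eval t = u t := by
    intro t; rw [hu]; simp [hUp]
  set Vpoly : Polynomial ℂ := (∏ k ∈ Finset.range (2*p-1), (Polynomial.X - Polynomial.C (k:ℂ))) *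
      Polynomial.C (1/((2*p-1).factorial:ℂ)) with hVp
  have hVeval : ∀ t : ℂ, Vpoly.eval t = v t := by
    intro t; rw [hv]; simp [hVp, Polynomial.eval_prod]; ring
  have hVne : Vpoly ≠ 0 := by
    intro h
    have h1 : Vpoly.eval (-1) = v (-1) := hVeval (-1)
    rw [h] at h1
    simp only [Polynomial.eval_zero] at h1
    have h2 : v (-1) ≠ 0 := by
      rw [hv]
      apply div_ne_zero
      · apply Finset.prod_ne_zero_iff.mpr
        intro k _
        intro hk0
        have hk1 : ((k:ℂ) + 1) ≠ 0 := by
          have : (((k+1:ℕ)):ℂ) ≠ 0 := Nat.cast_ne_zero.mpr (Nat.succ_ne_zero k)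
          push_cast at this
          exact this
        exact hk1 (by linear_combination -hk0)
      · exact Nat.cast_ne_zero.mpr (Nat.factorial_ne_zero _)
    exact h2 h1.symm
  have hcompA : A.comp Upoly * Vpoly = 0 := by
    apply Polynomial.funext
    intro t
    simp only [Polynomial.eval_mul, Polynomial.eval_comp, hUeval, hVeval, Polynomial.eval_zero]
    exact hAu0 t
  have hAcomp : A.comp Upoly = 0 := by
    rcases mul_eq_zero.mp hcompA with h | h
    · exact h
    · exact absurd h hVne
  have hAu : ∀ t : ℂ, A.eval (u t) = 0 := by
    intro t
    have := congrArg (Polynomial.eval t) hAcomp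
    simpa [Polynomial.eval_comp, hUeval] using this
  have hA0 : A = 0 := by
    apply Polynomial.funext
    intro x
    obtain ⟨t, ht⟩ := hsurj x
    simpa [ht] using hAu t
  rw [Ideal.mem_span_singleton]
  exact ⟨Q, by rw [hdec, hA0, hB0, hPW]; simp; ring⟩
end

section
/- The ideal generated by P(x,y) in ℂ[x,y] is a prime ideal, equivalently P(x,y) is irreducible in ℂ[x,y], where P(x,y) = y² - C_p (x + (p-1)²/(4p)) ∏_{i=0}^{p-2} (x + (i/(4p))(2p-2-i))² and C_p = (4p)^{2p-1}/((2p-1)!)². -/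
open MvPolynomial

noncomputable def myE : MvPolynomial (Fin 2) ℂ ≃ₐ[ℂ] Polynomial (Polynomial ℂ) :=
  (renameEquiv ℂ (Equiv.swap 0 1)).trans ((MvPolynomial.finSuccEquiv ℂ 1).trans
    (Polynomial.mapAlgEquiv ((MvPolynomial.finSuccEquiv ℂ 0).trans
      (Polynomial.mapAlgEquiv (isEmptyAlgEquiv ℂ (Fin 0))))))

lemma fsC (n : ℕ) (c : ℂ) : MvPolynomial.finSuccEquiv ℂ n (MvPolynomial.C c)
    = Polynomial.C (MvPolynomial.C c) := by
  simp [finSuccEquiv_apply]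

lemma myE_X1 : myE (MvPolynomial.X 1) = Polynomial.X := by
  simp [myE, Equiv.swap_apply_right, finSuccEquiv_X_zero]

lemma myE_C (c : ℂ) : myE (MvPolynomial.C c) = Polynomial.C (Polynomial.C c) := by
  simp [myE, fsC]
  exact MvPolynomial.coeff_zero_C c

lemma myE_X0 : myE (MvPolynomial.X 0) = Polynomial.C Polynomial.X := by
  have h1 : (Equiv.swap (0:Fin 2) 1) 0 = Fin.succ 0 := rfl
  simp only [myE, AlgEquiv.trans_apply, renameEquiv_apply, rename_X, h1,
    finSuccEquiv_X_succ, Polynomial.coe_mapAlgEquiv, Polynomial.map_C,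
    AlgEquiv.coe_trans, Function.comp_apply, finSuccEquiv_X_zero, Polynomial.map_X]
  congr 1
  simp [finSuccEquiv_X_zero]

lemma key (f : Polynomial ℂ) (hodd : Odd f.natDegree) :
    Irreducible ((Polynomial.X) ^ 2 - Polynomial.C f : Polynomial (Polynomial ℂ)) := by
  have hm : ((Polynomial.X) ^ 2 - Polynomial.C f : Polynomial (Polynomial ℂ)).Monic :=
    Polynomial.monic_X_pow_sub_C f (by norm_num)
  rw [hm.irreducible_iff_irreducible_map_fraction_map (K := RatFunc ℂ)]
  rw [Polynomial.map_sub, Polynomial.map_pow, Polynomial.map_X, Polynomial.map_C]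
  refine X_pow_sub_C_irreducible_of_prime Nat.prime_two (fun b hb => ?_)
  have hint : IsIntegral (Polynomial ℂ) b := by
    refine ⟨Polynomial.X ^ 2 - Polynomial.C f, Polynomial.monic_X_pow_sub_C f (by norm_num), ?_⟩
    simp [Polynomial.eval₂_sub, hb]
  obtain ⟨y, hy⟩ := IsIntegrallyClosed.isIntegral_iff.mp hint
  have hinj := IsFractionRing.injective (Polynomial ℂ) (RatFunc ℂ)
  have : y ^ 2 = f := hinj (by rw [map_pow, hy, hb])
  rw [← this, Polynomial.natDegree_pow] at hodd
  simp [Nat.odd_iff, Nat.mul_mod_right] at hodd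

open MvPolynomial in
theorem stmt_10 (p : ℕ) (hp : 2 ≤ p) (Cp : ℂ)
    (hC : Cp = (4 * (p : ℂ)) ^ (2 * p - 1) / ((2 * p - 1).factorial : ℂ) ^ 2)
    (P : MvPolynomial (Fin 2) ℂ)
    (hP : P = (X 1) ^ 2 - C Cp * ((X 0) + C (((p : ℂ) - 1) ^ 2 / (4 * (p : ℂ)))) *
      ∏ i ∈ Finset.range (p - 1),
        ((X 0) + C (((i : ℂ) / (4 * (p : ℂ))) * (2 * (p : ℂ) - 2 - (i : ℂ)))) ^ 2) :
    Irreducible P ∧ (Ideal.span {P}).IsPrime := by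
  have hp0 : (p : ℂ) ≠ 0 := Nat.cast_ne_zero.mpr (by omega)
  have hCp : Cp ≠ 0 := by
    rw [hC]
    apply div_ne_zero
    · exact pow_ne_zero _ (by simp [hp0])
    · exact pow_ne_zero _ (Nat.cast_ne_zero.mpr (Nat.factorial_ne_zero _))
  set a : ℂ := ((p : ℂ) - 1) ^ 2 / (4 * (p : ℂ)) with ha
  set f : Polynomial ℂ := Polynomial.C Cp * (Polynomial.X + Polynomial.C a) *
      ∏ i ∈ Finset.range (p - 1),
        (Polynomial.X + Polynomial.C (((i : ℂ) / (4 * (p : ℂ))) * (2 * (p : ℂ) - 2 - (i : ℂ)))) ^ 2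
    with hf
  have hdeg : f.natDegree = 2 * p - 1 := by
    rw [hf, mul_assoc, Polynomial.natDegree_C_mul hCp]
    rw [Polynomial.natDegree_mul (Polynomial.X_add_C_ne_zero a)
      (Finset.prod_ne_zero_iff.mpr fun i _ => pow_ne_zero _ (Polynomial.X_add_C_ne_zero _))]
    rw [Polynomial.natDegree_prod _ _ fun i _ => pow_ne_zero _ (Polynomial.X_add_C_ne_zero _)]
    simp only [Polynomial.natDegree_pow, Polynomial.natDegree_X_add_C]
    simp [Finset.sum_const]
    omega
  have hodd : Odd f.natDegree := by rw [hdeg]; exact ⟨p - 1, by omega⟩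
  have hQ := key f hodd
  have hEP : myE P = Polynomial.X ^ 2 - Polynomial.C f := by
    simp only [hP, hf, map_sub, map_pow, map_mul, map_add, map_prod, myE_X0, myE_X1, myE_C]
  have hIrr : Irreducible P := (MulEquiv.irreducible_iff (myE : MvPolynomial (Fin 2) ℂ ≃ₐ[ℂ]
    Polynomial (Polynomial ℂ))).mp (hEP ▸ hQ)
  exact ⟨hIrr, (Ideal.span_singleton_prime hIrr.ne_zero).mpr
    (UniqueFactorizationMonoid.irreducible_iff_prime.mp hIrr)⟩
end
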